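/- For every non-empty I ⊆ {1,…,r−1}, the element s_r c_I is not rational. Explicitly: if r−1 ∉ I, then u = s_r c_I satisfies u(e_{i_k}+e_r) = e_{i_1}+e_{r−1} and e_{i_k}+e_r ≤ e_{i_1}+e_{r−1}, a loop; if r−1 ∈ I and I ≠ {r−1}, then with b = max(I∖{r−1}), u(e_b+e_r) = e_{i_1}+e_r and e_b+e_r ≤ e_{i_1}+e_r, a loop; if I = {r−1}, then u swaps α_{r−1} and α_r, producing the directed two-cycle α_{r−1} → α_r → α_{r−1}. -/

import Mathlib

noncomputable section

open Finset

/-- `ee r i` is the standard basis vector `e_i` (1-based index) of `ℝ^r`. -/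
def ee (r i : ℕ) : Fin r → ℝ := fun j => if (j : ℕ) + 1 = i then 1 else 0

/-- The type-`D_r` simple roots, 1-based: `α_i = e_i - e_{i+1}` for `i ≤ r-1`,
`α_r = e_{r-1} + e_r`. -/
def sroot (r i : ℕ) : Fin r → ℝ :=
  if i = r then ee r (r - 1) + ee r r else ee r i - ee r (i + 1)

/-- Root-poset order: `ρ ≤ η` iff `η - ρ` is a non-negative integer combination
of the simple roots. -/
def rootLE (r : ℕ) (ρ η : Fin r → ℝ) : Prop :=
  ∃ m : ℕ → ℕ, η - ρ = ∑ i ∈ Finset.Icc 1 r, (m i : ℝ) • sroot r i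

/-- The positive roots of type `D_r`: `e_i ± e_j` for `1 ≤ i < j ≤ r`. -/
def Pos (r : ℕ) : Set (Fin r → ℝ) :=
  {v | ∃ i j, 1 ≤ i ∧ i < j ∧ j ≤ r ∧ (v = ee r i - ee r j ∨ v = ee r i + ee r j)}

/-- The `i`-th (1-based) coordinate of a vector. -/
def coordN (r : ℕ) (x : Fin r → ℝ) (i : ℕ) : ℝ :=
  ∑ j : Fin r, if (j : ℕ) + 1 = i then x j else 0

/-- The successor map on `I ∪ {r}`: least element of `I ∪ {r}` larger than `a`. -/
def nextI (r : ℕ) (I : Finset ℕ) (a : ℕ) : ℕ :=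
  WithTop.untopD r (((insert r I).filter (fun x => a < x)).min)

/-- `min (I ∪ {r})`; equals `min I` for nonempty `I ⊆ {1,…,r-1}` and `r` for `I = ∅`. -/
def minI (r : ℕ) (I : Finset ℕ) : ℕ := WithTop.untopD r ((insert r I).min)

/-- `max I` (0 if empty). -/
def maxI (I : Finset ℕ) : ℕ := WithBot.unbotD 0 (I.max)

/-- The increasing cycle `p_I` on `I ∪ {r}`, fixing all other points. -/
def pI (r : ℕ) (I : Finset ℕ) (a : ℕ) : ℕ :=
  if a ∈ I then nextI r I a else if a = r then minI r I else a

/-- Images of the basis vectors under `c_I`. -/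
def cIb (r : ℕ) (I : Finset ℕ) (j : ℕ) : Fin r → ℝ :=
  if j = r then ee r (minI r I) else -(ee r (pI r I j))

/-- The signed permutation `c_I`, extended linearly; for `I = ∅` it is `w_0`. -/
def cI (r : ℕ) (I : Finset ℕ) (x : Fin r → ℝ) : Fin r → ℝ :=
  ∑ j ∈ Finset.Icc 1 r, coordN r x j • cIb r I j

/-- Images of the basis vectors under `d_I`. -/
def dIb (r : ℕ) (I : Finset ℕ) (j : ℕ) : Fin r → ℝ :=
  if j = maxI I then ee r r
  else if j = r then -(ee r (minI r I))
  else -(ee r (pI r I j))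

/-- The signed permutation `d_I`, extended linearly. -/
def dI (r : ℕ) (I : Finset ℕ) (x : Fin r → ℝ) : Fin r → ℝ :=
  ∑ j ∈ Finset.Icc 1 r, coordN r x j • dIb r I j

/-- The longest element `w_0` for `r` odd: `e_i ↦ -e_i` for `i < r`, `e_r ↦ e_r`. -/
def w0 (r : ℕ) (x : Fin r → ℝ) : Fin r → ℝ :=
  fun j => if (j : ℕ) + 1 = r then x j else -(x j)

/-- The set `A_I`. -/
def AI (r : ℕ) (I : Finset ℕ) : Set (Fin r → ℝ) :=
  {v | ∃ a b, a ∈ I ∧ a < b ∧ b < nextI r I a ∧ v = ee r b - ee r (nextI r I a)}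

/-- The set `B_I`. -/
def BI (r : ℕ) (I : Finset ℕ) : Set (Fin r → ℝ) :=
  {v | ∃ q, minI r I < q ∧ q ≤ r ∧ v = ee r (minI r I) - ee r q}

/-- `ν₀(u) = u(Π₊) ∩ Π₊`. -/
def nu0 (r : ℕ) (u : (Fin r → ℝ) → (Fin r → ℝ)) : Set (Fin r → ℝ) :=
  {β | β ∈ Pos r ∧ ∃ γ ∈ Pos r, u γ = β}

/-- Arrow `α → β` in the rationality graph of `u`: `u⁻¹(α) ≤ β`,
expressed via a positive preimage `γ` of `α`. -/
def Arrow (r : ℕ) (u : (Fin r → ℝ) → (Fin r → ℝ)) (α β : Fin r → ℝ) : Prop :=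
  ∃ γ ∈ Pos r, u γ = α ∧ rootLE r γ β

/-- The rationality graph of `u` has a directed cycle. -/
def HasCycle (r : ℕ) (u : (Fin r → ℝ) → (Fin r → ℝ)) : Prop :=
  ∃ (n : ℕ) (f : ℕ → (Fin r → ℝ)), 0 < n ∧ (∀ i ≤ n, f i ∈ nu0 r u) ∧
    f 0 = f n ∧ ∀ i < n, Arrow r u (f i) (f (i + 1))

/-- The simple reflection `s_a` for `1 ≤ a ≤ r-1`: swaps coordinates `a` and `a+1`. -/
def sw (r a : ℕ) (x : Fin r → ℝ) : Fin r → ℝ := fun j =>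
  if (j : ℕ) + 1 = a then coordN r x (a + 1)
  else if (j : ℕ) + 1 = a + 1 then coordN r x a
  else x j

/-- The spin reflection `s_r`: `e_{r-1} ↦ -e_r`, `e_r ↦ -e_{r-1}`. -/
def sSpin (r : ℕ) (x : Fin r → ℝ) : Fin r → ℝ := fun j =>
  if (j : ℕ) + 1 = r - 1 then -(coordN r x r)
  else if (j : ℕ) + 1 = r then -(coordN r x (r - 1))
  else x j



lemma coordN_apply (r i : ℕ) (hi : 1 ≤ i) (hir : i ≤ r) (x : Fin r → ℝ) :
    coordN r x i = x ⟨i - 1, by omega⟩ := by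
  unfold coordN
  rw [Finset.sum_eq_single (⟨i - 1, by omega⟩ : Fin r)]
  · rw [if_pos (show (i - 1) + 1 = i by omega)]
  · intro b _ hb
    rw [if_neg]
    intro h
    exact hb (Fin.ext (show (b : ℕ) = i - 1 by omega))
  · intro h; exact absurd (Finset.mem_univ _) h

lemma coordN_add (r : ℕ) (x y : Fin r → ℝ) (i : ℕ) :
    coordN r (x + y) i = coordN r x i + coordN r y i := by
  unfold coordN
  rw [← Finset.sum_add_distrib]
  refine Finset.sum_congr rfl fun j _ => ?_
  by_cases h : (j : ℕ) + 1 = i <;> simp [h]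

lemma coordN_neg (r : ℕ) (x : Fin r → ℝ) (i : ℕ) :
    coordN r (-x) i = -(coordN r x i) := by
  unfold coordN
  rw [← Finset.sum_neg_distrib]
  refine Finset.sum_congr rfl fun j _ => ?_
  by_cases h : (j : ℕ) + 1 = i <;> simp [h]

lemma coordN_sub (r : ℕ) (x y : Fin r → ℝ) (i : ℕ) :
    coordN r (x - y) i = coordN r x i - coordN r y i := by
  rw [sub_eq_add_neg, coordN_add, coordN_neg, sub_eq_add_neg]

lemma cI_add (r : ℕ) (I : Finset ℕ) (x y : Fin r → ℝ) :
    cI r I (x + y) = cI r I x + cI r I y := by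
  unfold cI
  rw [← Finset.sum_add_distrib]
  exact Finset.sum_congr rfl fun j _ => by rw [coordN_add, add_smul]

lemma cI_neg (r : ℕ) (I : Finset ℕ) (x : Fin r → ℝ) :
    cI r I (-x) = -(cI r I x) := by
  unfold cI
  rw [← Finset.sum_neg_distrib]
  exact Finset.sum_congr rfl fun j _ => by rw [coordN_neg, neg_smul]

lemma cI_sub (r : ℕ) (I : Finset ℕ) (x y : Fin r → ℝ) :
    cI r I (x - y) = cI r I x - cI r I y := by
  rw [sub_eq_add_neg, cI_add, cI_neg, sub_eq_add_neg]

lemma cI_ee (r : ℕ) (I : Finset ℕ) (a : ℕ) (ha : 1 ≤ a) (har : a ≤ r) :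
    cI r I (ee r a) = cIb r I a := by
  unfold cI
  rw [Finset.sum_eq_single a]
  · rw [coordN_apply r a ha har]
    have h1 : ee r a ⟨a - 1, by omega⟩ = 1 := if_pos (show (a - 1) + 1 = a by omega)
    rw [h1, one_smul]
  · intro b hb hba
    rw [Finset.mem_Icc] at hb
    rw [coordN_apply r b hb.1 hb.2]
    have h0 : ee r a ⟨b - 1, by omega⟩ = 0 := if_neg (show ¬((b - 1) + 1 = a) by omega)
    rw [h0, zero_smul]
  · intro h; exact absurd (Finset.mem_Icc.mpr ⟨ha, har⟩) h

lemma minI_eq (r : ℕ) (I : Finset ℕ) :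
    minI r I = (insert r I).min' (Finset.insert_nonempty r I) := by
  unfold minI
  rw [← Finset.coe_min' (Finset.insert_nonempty r I)]
  rfl

lemma maxI_eq (I : Finset ℕ) (hI : I.Nonempty) : maxI I = I.max' hI := by
  unfold maxI
  rw [← Finset.coe_max' hI]
  rfl

lemma nextI_eq (r : ℕ) (I : Finset ℕ) (a : ℕ) (h : a < r) :
    nextI r I a = ((insert r I).filter (fun x => a < x)).min'
      ⟨r, Finset.mem_filter.mpr ⟨Finset.mem_insert_self r I, h⟩⟩ := by
  unfold nextI
  rw [← Finset.coe_min' ⟨r, Finset.mem_filter.mpr ⟨Finset.mem_insert_self r I, h⟩⟩]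
  rfl

lemma rootLE_refl (r : ℕ) (γ : Fin r → ℝ) : rootLE r γ γ :=
  ⟨fun _ => 0, by simp⟩

lemma sum_tele (r m : ℕ) : ∀ a, m ≤ a → a < r →
    ∑ i ∈ Finset.Ico m a, sroot r i = ee r m - ee r a := by
  intro a
  induction a with
  | zero =>
    intro h1 _
    have : m = 0 := by omega
    subst this
    simp
  | succ n ih =>
    intro h1 h2
    rcases Nat.lt_or_ge m (n + 1) with h | h
    · have hmn : m ≤ n := by omega
      rw [Finset.sum_Ico_succ_top hmn, ih hmn (by omega)]
      have : sroot r n = ee r n - ee r (n + 1) := if_neg (by omega)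
      rw [this]
      abel
    · have : m = n + 1 := by omega
      subst this
      simp

lemma filter_Icc (r m a : ℕ) (hm : 1 ≤ m) (ha : a ≤ r) :
    (Finset.Icc 1 r).filter (fun i => m ≤ i ∧ i < a) = Finset.Ico m a := by
  ext i
  simp only [Finset.mem_filter, Finset.mem_Icc, Finset.mem_Ico]
  omega

lemma sroot_rm1 (r : ℕ) (hr : 2 ≤ r) : sroot r (r - 1) = ee r (r - 1) - ee r r := by
  unfold sroot
  rw [if_neg (by omega), show r - 1 + 1 = r by omega]

lemma sroot_r (r : ℕ) : sroot r r = ee r (r - 1) + ee r r := if_pos rfl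

lemma sum_ind (r m a : ℕ) (hm : 1 ≤ m) (hma : m ≤ a) (ha : a < r) :
    ∑ i ∈ Finset.Icc 1 r, (if m ≤ i ∧ i < a then sroot r i else 0)
      = ee r m - ee r a := by
  rw [← Finset.sum_filter, filter_Icc r m a hm (by omega), sum_tele r m a hma ha]

lemma rootLE_case1 (r m a : ℕ) (hr : 5 ≤ r) (hm : 1 ≤ m) (hma : m ≤ a) (ha : a ≤ r - 2) :
    rootLE r (ee r a + ee r r) (ee r m + ee r (r - 1)) := by
  refine ⟨fun i => if (m ≤ i ∧ i < a) ∨ i = r - 1 then 1 else 0, ?_⟩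
  have hcongr : ∀ i ∈ Finset.Icc 1 r,
      ((if (m ≤ i ∧ i < a) ∨ i = r - 1 then (1 : ℕ) else 0 : ℕ) : ℝ) • sroot r i
      = (if m ≤ i ∧ i < a then sroot r i else 0)
        + (if i = r - 1 then sroot r i else 0) := by
    intro i _
    by_cases h1 : m ≤ i ∧ i < a
    · rw [if_pos (Or.inl h1), if_pos h1, if_neg (by omega), Nat.cast_one, one_smul, add_zero]
    · by_cases h2 : i = r - 1
      · rw [if_pos (Or.inr h2), if_neg h1, if_pos h2, Nat.cast_one, one_smul, zero_add]
      · rw [if_neg (by tauto), if_neg h1, if_neg h2, Nat.cast_zero, zero_smul, add_zero]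
  rw [Finset.sum_congr rfl hcongr, Finset.sum_add_distrib,
    sum_ind r m a hm hma (by omega), Finset.sum_ite_eq' (Finset.Icc 1 r) (r - 1) (sroot r),
    if_pos (Finset.mem_Icc.mpr ⟨by omega, by omega⟩), sroot_rm1 r (by omega)]
  abel

lemma rootLE_case2 (r m b : ℕ) (hr : 5 ≤ r) (hm : 1 ≤ m) (hmb : m ≤ b) (hb : b ≤ r - 2) :
    rootLE r (ee r b + ee r r) (ee r m + ee r r) := by
  refine ⟨fun i => if m ≤ i ∧ i < b then 1 else 0, ?_⟩
  have hcongr : ∀ i ∈ Finset.Icc 1 r,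
      ((if m ≤ i ∧ i < b then (1 : ℕ) else 0 : ℕ) : ℝ) • sroot r i
      = (if m ≤ i ∧ i < b then sroot r i else 0) := by
    intro i _
    by_cases h1 : m ≤ i ∧ i < b
    · rw [if_pos h1, if_pos h1, Nat.cast_one, one_smul]
    · rw [if_neg h1, if_neg h1, Nat.cast_zero, zero_smul]
  rw [Finset.sum_congr rfl hcongr, sum_ind r m b hm hmb (by omega)]
  abel

lemma sSpin_case1 (r m : ℕ) (hr : 5 ≤ r) (hm1 : 1 ≤ m) (hm : m ≤ r - 2) :
    sSpin r (-(ee r r) + ee r m) = ee r m + ee r (r - 1) := by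
  have c1 : coordN r (-(ee r r) + ee r m) r = -1 := by
    rw [coordN_apply r r (by omega) le_rfl]
    show -(if (r - 1) + 1 = r then (1:ℝ) else 0) + (if (r - 1) + 1 = m then (1:ℝ) else 0) = -1
    rw [if_pos (by omega), if_neg (by omega)]
    norm_num
  have c2 : coordN r (-(ee r r) + ee r m) (r - 1) = 0 := by
    rw [coordN_apply r (r - 1) (by omega) (by omega)]
    show -(if (r - 1 - 1) + 1 = r then (1:ℝ) else 0) + (if (r - 1 - 1) + 1 = m then (1:ℝ) else 0) = 0
    rw [if_neg (by omega), if_neg (by omega)]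
    norm_num
  funext j
  show (if (j : ℕ) + 1 = r - 1 then -(coordN r (-(ee r r) + ee r m) r)
    else if (j : ℕ) + 1 = r then -(coordN r (-(ee r r) + ee r m) (r - 1))
    else (-(ee r r) + ee r m) j) = _
  rw [c1, c2]
  show _ = (if (j : ℕ) + 1 = m then (1:ℝ) else 0) + (if (j : ℕ) + 1 = r - 1 then (1:ℝ) else 0)
  by_cases h1 : (j : ℕ) + 1 = r - 1
  · rw [if_pos h1, if_pos h1, if_neg (by omega)]
    norm_num
  · rw [if_neg h1, if_neg h1]
    by_cases h2 : (j : ℕ) + 1 = r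
    · rw [if_pos h2, if_neg (by omega)]
      norm_num
    · rw [if_neg h2]
      show -(if (j : ℕ) + 1 = r then (1:ℝ) else 0) + (if (j : ℕ) + 1 = m then (1:ℝ) else 0) = _
      rw [if_neg h2]
      norm_num

lemma sSpin_case2 (r m : ℕ) (hr : 5 ≤ r) (hm : m ≤ r - 2) :
    sSpin r (-(ee r (r - 1)) + ee r m) = ee r m + ee r r := by
  have c1 : coordN r (-(ee r (r - 1)) + ee r m) r = 0 := by
    rw [coordN_apply r r (by omega) le_rfl]
    show -(if (r - 1) + 1 = r - 1 then (1:ℝ) else 0) + (if (r - 1) + 1 = m then (1:ℝ) else 0) = 0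
    rw [if_neg (by omega), if_neg (by omega)]
    norm_num
  have c2 : coordN r (-(ee r (r - 1)) + ee r m) (r - 1) = -1 := by
    rw [coordN_apply r (r - 1) (by omega) (by omega)]
    show -(if (r - 1 - 1) + 1 = r - 1 then (1:ℝ) else 0) + (if (r - 1 - 1) + 1 = m then (1:ℝ) else 0) = -1
    rw [if_pos (by omega), if_neg (by omega)]
    norm_num
  funext j
  show (if (j : ℕ) + 1 = r - 1 then -(coordN r (-(ee r (r - 1)) + ee r m) r)
    else if (j : ℕ) + 1 = r then -(coordN r (-(ee r (r - 1)) + ee r m) (r - 1))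
    else (-(ee r (r - 1)) + ee r m) j) = _
  rw [c1, c2]
  show _ = (if (j : ℕ) + 1 = m then (1:ℝ) else 0) + (if (j : ℕ) + 1 = r then (1:ℝ) else 0)
  by_cases h1 : (j : ℕ) + 1 = r - 1
  · rw [if_pos h1, if_neg (by omega), if_neg (by omega)]
    norm_num
  · rw [if_neg h1]
    by_cases h2 : (j : ℕ) + 1 = r
    · rw [if_pos h2, if_neg (by omega), if_pos h2]
      norm_num
    · rw [if_neg h2, if_neg h2]
      show -(if (j : ℕ) + 1 = r - 1 then (1:ℝ) else 0) + (if (j : ℕ) + 1 = m then (1:ℝ) else 0) = _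
      rw [if_neg h1]
      norm_num

lemma sSpin_case3a (r : ℕ) (hr : 5 ≤ r) :
    sSpin r (-(ee r r) - ee r (r - 1)) = ee r (r - 1) + ee r r := by
  have c1 : coordN r (-(ee r r) - ee r (r - 1)) r = -1 := by
    rw [coordN_apply r r (by omega) le_rfl]
    show -(if (r - 1) + 1 = r then (1:ℝ) else 0) - (if (r - 1) + 1 = r - 1 then (1:ℝ) else 0) = -1
    rw [if_pos (by omega), if_neg (by omega)]
    norm_num
  have c2 : coordN r (-(ee r r) - ee r (r - 1)) (r - 1) = -1 := by
    rw [coordN_apply r (r - 1) (by omega) (by omega)]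
    show -(if (r - 1 - 1) + 1 = r then (1:ℝ) else 0) - (if (r - 1 - 1) + 1 = r - 1 then (1:ℝ) else 0) = -1
    rw [if_neg (by omega), if_pos (by omega)]
    norm_num
  funext j
  show (if (j : ℕ) + 1 = r - 1 then -(coordN r (-(ee r r) - ee r (r - 1)) r)
    else if (j : ℕ) + 1 = r then -(coordN r (-(ee r r) - ee r (r - 1)) (r - 1))
    else (-(ee r r) - ee r (r - 1)) j) = _
  rw [c1, c2]
  show _ = (if (j : ℕ) + 1 = r - 1 then (1:ℝ) else 0) + (if (j : ℕ) + 1 = r then (1:ℝ) else 0)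
  by_cases h1 : (j : ℕ) + 1 = r - 1
  · rw [if_pos h1, if_pos h1, if_neg (by omega)]
    norm_num
  · rw [if_neg h1, if_neg h1]
    by_cases h2 : (j : ℕ) + 1 = r
    · rw [if_pos h2, if_pos h2]
      norm_num
    · rw [if_neg h2, if_neg h2]
      show -(if (j : ℕ) + 1 = r then (1:ℝ) else 0) - (if (j : ℕ) + 1 = r - 1 then (1:ℝ) else 0) = _
      rw [if_neg h1, if_neg h2]
      norm_num

lemma sSpin_case3b (r : ℕ) (hr : 5 ≤ r) :
    sSpin r (-(ee r r) + ee r (r - 1)) = ee r (r - 1) - ee r r := by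
  have c1 : coordN r (-(ee r r) + ee r (r - 1)) r = -1 := by
    rw [coordN_apply r r (by omega) le_rfl]
    show -(if (r - 1) + 1 = r then (1:ℝ) else 0) + (if (r - 1) + 1 = r - 1 then (1:ℝ) else 0) = -1
    rw [if_pos (by omega), if_neg (by omega)]
    norm_num
  have c2 : coordN r (-(ee r r) + ee r (r - 1)) (r - 1) = 1 := by
    rw [coordN_apply r (r - 1) (by omega) (by omega)]
    show -(if (r - 1 - 1) + 1 = r then (1:ℝ) else 0) + (if (r - 1 - 1) + 1 = r - 1 then (1:ℝ) else 0) = 1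
    rw [if_neg (by omega), if_pos (by omega)]
    norm_num
  funext j
  show (if (j : ℕ) + 1 = r - 1 then -(coordN r (-(ee r r) + ee r (r - 1)) r)
    else if (j : ℕ) + 1 = r then -(coordN r (-(ee r r) + ee r (r - 1)) (r - 1))
    else (-(ee r r) + ee r (r - 1)) j) = _
  rw [c1, c2]
  show _ = (if (j : ℕ) + 1 = r - 1 then (1:ℝ) else 0) - (if (j : ℕ) + 1 = r then (1:ℝ) else 0)
  by_cases h1 : (j : ℕ) + 1 = r - 1
  · rw [if_pos h1, if_pos h1, if_neg (by omega)]
    norm_num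
  · rw [if_neg h1, if_neg h1]
    by_cases h2 : (j : ℕ) + 1 = r
    · rw [if_pos h2, if_pos h2]
      norm_num
    · rw [if_neg h2, if_neg h2]
      show -(if (j : ℕ) + 1 = r then (1:ℝ) else 0) + (if (j : ℕ) + 1 = r - 1 then (1:ℝ) else 0) = _
      rw [if_neg h1, if_neg h2]
      norm_num

/-- for nonempty `I`, `s_r c_I` is not rational; explicit loop or
two-cycle certificates as in the three cases. -/
theorem stmt14 (r : ℕ) (hr : 5 ≤ r) (hodd : Odd r)
    (I : Finset ℕ) (hI : I.Nonempty) (hIs : I ⊆ Finset.Icc 1 (r - 1)) :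
    HasCycle r (fun x => sSpin r (cI r I x)) ∧
    (r - 1 ∉ I →
      sSpin r (cI r I (ee r (maxI I) + ee r r)) = ee r (minI r I) + ee r (r - 1) ∧
      rootLE r (ee r (maxI I) + ee r r) (ee r (minI r I) + ee r (r - 1))) ∧
    (r - 1 ∈ I → I ≠ {r - 1} →
      sSpin r (cI r I (ee r (maxI (I.erase (r - 1))) + ee r r))
          = ee r (minI r I) + ee r r ∧
      rootLE r (ee r (maxI (I.erase (r - 1))) + ee r r)
          (ee r (minI r I) + ee r r)) ∧
    (I = {r - 1} →
      sSpin r (cI r I (sroot r (r - 1))) = sroot r r ∧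
      sSpin r (cI r I (sroot r r)) = sroot r (r - 1)) := by
  by_cases hsing : I = {r - 1}
  · -- Case 3 : I = {r-1}
    subst hsing
    have hm : minI r {r - 1} = r - 1 := by
      have hmem : minI r {r - 1} ∈ insert r ({r - 1} : Finset ℕ) := by
        rw [minI_eq]; exact Finset.min'_mem _ _
      rcases Finset.mem_insert.mp hmem with h | h
      · exfalso
        have hle : minI r {r - 1} ≤ r - 1 := by
          rw [minI_eq]
          exact Finset.min'_le _ _ (Finset.mem_insert_of_mem (Finset.mem_singleton_self _))
        omega
      · exact Finset.mem_singleton.mp h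
    have hnext : nextI r {r - 1} (r - 1) = r := by
      rw [nextI_eq r {r - 1} (r - 1) (by omega)]
      apply le_antisymm
      · exact Finset.min'_le _ _
          (Finset.mem_filter.mpr ⟨Finset.mem_insert_self r _, by omega⟩)
      · apply Finset.le_min'
        intro y hy
        rcases Finset.mem_filter.mp hy with ⟨hy1, hy2⟩
        rcases Finset.mem_insert.mp hy1 with h | h
        · omega
        · have := Finset.mem_singleton.mp h; omega
    have hcIb1 : cIb r {r - 1} (r - 1) = -(ee r r) := by
      unfold cIb pI
      rw [if_neg (show ¬(r - 1 = r) by omega), if_pos (Finset.mem_singleton_self _), hnext]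
    have hcIb2 : cIb r {r - 1} r = ee r (r - 1) := by
      have h0 : cIb r {r - 1} r = ee r (minI r {r - 1}) := if_pos rfl
      rw [h0, hm]
    have key3a : sSpin r (cI r {r - 1} (sroot r (r - 1))) = sroot r r := by
      rw [sroot_rm1 r (by omega), cI_sub, cI_ee r {r - 1} (r - 1) (by omega) (by omega),
        cI_ee r {r - 1} r (by omega) le_rfl, hcIb1, hcIb2, sroot_r]
      exact sSpin_case3a r hr
    have key3b : sSpin r (cI r {r - 1} (sroot r r)) = sroot r (r - 1) := by
      rw [sroot_r, cI_add, cI_ee r {r - 1} (r - 1) (by omega) (by omega),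
        cI_ee r {r - 1} r (by omega) le_rfl, hcIb1, hcIb2, sroot_rm1 r (by omega)]
      exact sSpin_case3b r hr
    have P1 : sroot r (r - 1) ∈ Pos r :=
      ⟨r - 1, r, by omega, by omega, le_rfl, Or.inl (sroot_rm1 r (by omega))⟩
    have P2 : sroot r r ∈ Pos r :=
      ⟨r - 1, r, by omega, by omega, le_rfl, Or.inr (sroot_r r)⟩
    refine ⟨⟨2, fun i => if i = 1 then sroot r r else sroot r (r - 1), by omega, ?_, by norm_num, ?_⟩,
      fun h => absurd (show r - 1 ∈ ({r - 1} : Finset ℕ) from Finset.mem_singleton_self _) h,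
      fun _ h => absurd rfl h,
      fun _ => ⟨key3a, key3b⟩⟩
    · intro i _
      by_cases hi : i = 1
      · subst hi
        exact ⟨P2, sroot r (r - 1), P1, key3a⟩
      · have hred : (fun i => if i = 1 then sroot r r else sroot r (r - 1)) i
            = sroot r (r - 1) := if_neg hi
        rw [hred]
        exact ⟨P1, sroot r r, P2, key3b⟩
    · intro i hi
      interval_cases i
      · exact ⟨sroot r r, P2, key3b, rootLE_refl r _⟩
      · exact ⟨sroot r (r - 1), P1, key3a, rootLE_refl r _⟩
  · -- minI facts
    have hmle : ∀ x ∈ I, minI r I ≤ x := fun x hx => by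
      rw [minI_eq]
      exact Finset.min'_le _ _ (Finset.mem_insert_of_mem hx)
    have hmI : minI r I ∈ I := by
      obtain ⟨x0, hx0⟩ := hI
      have hx0' := Finset.mem_Icc.mp (hIs hx0)
      have hmem : minI r I ∈ insert r I := by
        rw [minI_eq]; exact Finset.min'_mem _ _
      rcases Finset.mem_insert.mp hmem with h | h
      · exfalso; have := hmle x0 hx0; omega
      · exact h
    have hm1 : 1 ≤ minI r I := (Finset.mem_Icc.mp (hIs hmI)).1
    have hmr : minI r I ≤ r - 1 := (Finset.mem_Icc.mp (hIs hmI)).2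
    by_cases hcase : r - 1 ∈ I
    · -- Case 2 : r-1 ∈ I, I ≠ {r-1}
      have hJne : (I.erase (r - 1)).Nonempty := by
        by_contra h
        rw [Finset.not_nonempty_iff_eq_empty, Finset.erase_eq_empty_iff] at h
        rcases h with h | h
        · exact absurd h (Finset.nonempty_iff_ne_empty.mp hI)
        · exact hsing h
      have hbJ : maxI (I.erase (r - 1)) ∈ I.erase (r - 1) := by
        rw [maxI_eq _ hJne]; exact Finset.max'_mem _ _
      have hble : ∀ x ∈ I.erase (r - 1), x ≤ maxI (I.erase (r - 1)) := fun x hx => by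
        rw [maxI_eq _ hJne]; exact Finset.le_max' _ x hx
      obtain ⟨hbne, hbI⟩ := Finset.mem_erase.mp hbJ
      have hb1 : 1 ≤ maxI (I.erase (r - 1)) := (Finset.mem_Icc.mp (hIs hbI)).1
      have hb2 : maxI (I.erase (r - 1)) ≤ r - 2 := by
        have := (Finset.mem_Icc.mp (hIs hbI)).2
        omega
      have hmb : minI r I ≤ maxI (I.erase (r - 1)) := hmle _ hbI
      have hnext : nextI r I (maxI (I.erase (r - 1))) = r - 1 := by
        rw [nextI_eq r I _ (by omega)]
        apply le_antisymm
        · exact Finset.min'_le _ _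
            (Finset.mem_filter.mpr ⟨Finset.mem_insert_of_mem hcase, by omega⟩)
        · apply Finset.le_min'
          intro y hy
          rcases Finset.mem_filter.mp hy with ⟨hy1, hy2⟩
          rcases Finset.mem_insert.mp hy1 with h | h
          · omega
          · by_cases hyr : y = r - 1
            · omega
            · have := hble y (Finset.mem_erase.mpr ⟨hyr, h⟩)
              omega
      have hcIbb : cIb r I (maxI (I.erase (r - 1))) = -(ee r (r - 1)) := by
        unfold cIb pI
        rw [if_neg (show ¬(maxI (I.erase (r - 1)) = r) by omega), if_pos hbI, hnext]
      have hcIbr : cIb r I r = ee r (minI r I) := if_pos rfl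
      have key2 : sSpin r (cI r I (ee r (maxI (I.erase (r - 1))) + ee r r))
          = ee r (minI r I) + ee r r := by
        rw [cI_add, cI_ee r I _ hb1 (by omega), cI_ee r I r (by omega) le_rfl, hcIbb, hcIbr]
        exact sSpin_case2 r (minI r I) hr (by omega)
      have hle2 : rootLE r (ee r (maxI (I.erase (r - 1))) + ee r r)
          (ee r (minI r I) + ee r r) :=
        rootLE_case2 r (minI r I) (maxI (I.erase (r - 1))) hr hm1 hmb hb2
      have hposγ : (ee r (maxI (I.erase (r - 1))) + ee r r) ∈ Pos r :=
        ⟨maxI (I.erase (r - 1)), r, hb1, by omega, le_rfl, Or.inr rfl⟩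
      have hposβ : (ee r (minI r I) + ee r r) ∈ Pos r :=
        ⟨minI r I, r, hm1, by omega, le_rfl, Or.inr rfl⟩
      refine ⟨⟨1, fun _ => ee r (minI r I) + ee r r, one_pos, ?_, rfl, ?_⟩,
        fun h => absurd hcase h,
        fun _ _ => ⟨key2, hle2⟩,
        fun h => absurd h hsing⟩
      · intro i _
        exact ⟨hposβ, ee r (maxI (I.erase (r - 1))) + ee r r, hposγ, key2⟩
      · intro i _
        exact ⟨ee r (maxI (I.erase (r - 1))) + ee r r, hposγ, key2, hle2⟩
    · -- Case 1 : r-1 ∉ I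
      have haI : maxI I ∈ I := by rw [maxI_eq I hI]; exact Finset.max'_mem I hI
      have hale : ∀ x ∈ I, x ≤ maxI I := fun x hx => by
        rw [maxI_eq I hI]; exact Finset.le_max' I x hx
      have ha1 : 1 ≤ maxI I := (Finset.mem_Icc.mp (hIs haI)).1
      have ha2 : maxI I ≤ r - 2 := by
        have h1 := (Finset.mem_Icc.mp (hIs haI)).2
        have h2 : maxI I ≠ r - 1 := fun h => hcase (h ▸ haI)
        omega
      have hma : minI r I ≤ maxI I := hmle _ haI
      have hnext : nextI r I (maxI I) = r := by
        rw [nextI_eq r I (maxI I) (by omega)]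
        apply le_antisymm
        · exact Finset.min'_le _ _
            (Finset.mem_filter.mpr ⟨Finset.mem_insert_self r I, by omega⟩)
        · apply Finset.le_min'
          intro y hy
          rcases Finset.mem_filter.mp hy with ⟨hy1, hy2⟩
          rcases Finset.mem_insert.mp hy1 with h | h
          · omega
          · have := hale y h; omega
      have hcIba : cIb r I (maxI I) = -(ee r r) := by
        unfold cIb pI
        rw [if_neg (show ¬(maxI I = r) by omega), if_pos haI, hnext]
      have hcIbr : cIb r I r = ee r (minI r I) := if_pos rfl
      have key1 : sSpin r (cI r I (ee r (maxI I) + ee r r))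
          = ee r (minI r I) + ee r (r - 1) := by
        rw [cI_add, cI_ee r I (maxI I) ha1 (by omega), cI_ee r I r (by omega) le_rfl,
          hcIba, hcIbr]
        exact sSpin_case1 r (minI r I) hr hm1 (by omega)
      have hle1 : rootLE r (ee r (maxI I) + ee r r) (ee r (minI r I) + ee r (r - 1)) :=
        rootLE_case1 r (minI r I) (maxI I) hr hm1 hma ha2
      have hposγ : (ee r (maxI I) + ee r r) ∈ Pos r :=
        ⟨maxI I, r, ha1, by omega, le_rfl, Or.inr rfl⟩
      have hposβ : (ee r (minI r I) + ee r (r - 1)) ∈ Pos r :=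
        ⟨minI r I, r - 1, hm1, by omega, by omega, Or.inr rfl⟩
      refine ⟨⟨1, fun _ => ee r (minI r I) + ee r (r - 1), one_pos, ?_, rfl, ?_⟩,
        fun _ => ⟨key1, hle1⟩,
        fun h => absurd h hcase,
        fun h => absurd h hsing⟩
      · intro i _
        exact ⟨hposβ, ee r (maxI I) + ee r r, hposγ, key1⟩
      · intro i _
        exact ⟨ee r (maxI I) + ee r r, hposγ, key1, hle1⟩

end
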